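/- arXiv:1611.04843 — 10 statements merged into one kernel-verified Lean document; each statement's English description precedes it below -/
import Mathlib

section
/- For all natural numbers x and y, the binomial coefficient C(x,y) is given by the formula C(x,y) = ⌊(2^{x+1}+1)^{x} / 2^{(x+1)·y}⌋ ∸ 2^{x+1}·⌊(2^{x+1}+1)^{x} / 2^{(x+1)·(y+1)}⌋. -/
/-!
Since every `C(x, k)` is at most `2 ^ x`, the binomial expansion `(b + 1) ^ x = ∑ C(x, k) b ^ k`
is the base-`b` expansion of `(b + 1) ^ x` whenever `2 ^ x < b`: no carries occur. The right-hand
side is `⌊n / B ^ y⌋ mod B` for `n = (B + 1) ^ x`, `B = 2 ^ (x + 1)`, i.e. the `y`-th base-`B` digit.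
-/

open Finset

namespace Nat

theorem ofDigits_map_range (b : ℕ) (c : ℕ → ℕ) (n : ℕ) :
    ofDigits b ((List.range n).map c) = ∑ i ∈ range n, c i * b ^ i := by
  induction n with
  | zero => simp
  | succ n ih =>
    rw [List.range_succ, List.map_append, ofDigits_append, ih, sum_range_succ]
    simp [mul_comm]

theorem add_one_pow_eq_ofDigits_choose (b x : ℕ) :
    (b + 1) ^ x = ofDigits b ((List.range (x + 1)).map x.choose) := by
  rw [ofDigits_map_range, add_pow]
  simp only [one_pow, mul_one, mul_comm, Nat.cast_id]

theorem digits_add_one_pow {b x : ℕ} (hb : 2 ^ x < b) :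
    b.digits ((b + 1) ^ x) = (List.range (x + 1)).map x.choose := by
  rw [add_one_pow_eq_ofDigits_choose]
  refine digits_ofDigits b (Nat.one_le_two_pow.trans_lt hb) _ ?_ ?_
  · simp only [List.mem_map]
    rintro _ ⟨k, -, rfl⟩
    exact (choose_le_two_pow x k).trans_lt hb
  · intro h
    simp [List.getLast_map, List.getLast_range]

theorem choose_eq_div_pow_mod {b x : ℕ} (hb : 2 ^ x < b) (y : ℕ) :
    x.choose y = (b + 1) ^ x / b ^ y % b := by
  rw [← getD_digits _ _ (Nat.one_le_two_pow.trans_lt hb), digits_add_one_pow hb,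
    List.getD_eq_getElem?_getD, List.getElem?_map]
  rcases le_or_gt y x with hyx | hxy
  · simp [List.getElem?_range (Nat.lt_succ_of_le hyx)]
  · rw [List.getElem?_eq_none (by simpa using hxy), Nat.choose_eq_zero_of_lt hxy]; rfl

end Nat

theorem binom_formula (x y : ℕ) :
    Nat.choose x y =
      (2 ^ (x + 1) + 1) ^ x / 2 ^ ((x + 1) * y) -
        2 ^ (x + 1) * ((2 ^ (x + 1) + 1) ^ x / 2 ^ ((x + 1) * (y + 1))) := by
  rw [pow_mul, pow_mul, pow_succ _ y, ← Nat.div_div_eq_div_mul, ← Nat.mod_def]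
  exact Nat.choose_eq_div_pow_mod (Nat.pow_lt_pow_succ one_lt_two) y
end

section
/- Let n, l₁ ≥ 1 and l₂ ≥ (n+1)·l₁, and let x₀,…,x_{n−1} ∈ ℕ with x_i < 2^{l₁} for all i and x = ∑_{i=0}^{n−1} x_i·2^{i·l₁}. Then incrx(x,n,l₁,l₂) = ∑_{i=0}^{n−1} x_i·2^{i·l₂}. -/
def rep (x n l : ℕ) : ℕ := x * ((2 ^ (n * l) - 1) / (2 ^ l - 1))

def incrx (x n l₁ l₂ : ℕ) : ℕ := rep x n (l₂ - l₁) &&& rep (2 ^ l₁ - 1) n l₂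

open Finset

/-!
With `d = l₂ - l₁`, `rep x n d` is `n` copies of `x` shifted by multiples of `d`; they do not
overlap because `x < 2 ^ (n * l₁) ≤ 2 ^ d`. Hence bit `k * l₂ + r = k * d + (k * l₁ + r)` of
it is bit `r` of the digit `xs k` whenever `r < l₁`, and the mask `rep (2 ^ l₁ - 1) n l₂`
keeps exactly these bits.
-/

namespace Nat

theorem sum_range_succ_mul_two_pow (a : ℕ → ℕ) (n w : ℕ) :
    ∑ i ∈ range (n + 1), a i * 2 ^ (i * w) =
      2 ^ w * ∑ i ∈ range n, a (i + 1) * 2 ^ (i * w) + a 0 := by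
  rw [sum_range_succ', mul_sum]
  simp only [zero_mul, pow_zero, mul_one, add_mul, one_mul, pow_add]
  congr 1
  exact sum_congr rfl fun i _ => by ring

theorem sum_mul_two_pow_lt {w n : ℕ} {a : ℕ → ℕ} (ha : ∀ i < n, a i < 2 ^ w) :
    ∑ i ∈ range n, a i * 2 ^ (i * w) < 2 ^ (n * w) := by
  induction n generalizing a with
  | zero => simp
  | succ n ih =>
    have hrest := ih fun i hi => ha (i + 1) (by omega)
    have h0 := ha 0 n.succ_pos
    rw [sum_range_succ_mul_two_pow, add_mul, one_mul, pow_add, mul_comm (2 ^ (n * w))]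
    nlinarith

theorem testBit_sum_mul_two_pow {w n : ℕ} {a : ℕ → ℕ} (ha : ∀ i < n, a i < 2 ^ w)
    {r : ℕ} (hr : r < w) (k : ℕ) :
    (∑ i ∈ range n, a i * 2 ^ (i * w)).testBit (k * w + r) =
      (decide (k < n) && (a k).testBit r) := by
  induction n generalizing a k with
  | zero => simp
  | succ n ih =>
    rw [sum_range_succ_mul_two_pow, testBit_two_pow_mul_add _ (ha 0 n.succ_pos)]
    cases k with
    | zero => simp [hr]
    | succ k =>
      rw [if_neg (by nlinarith), show (k + 1) * w + r - w = k * w + r by rw [add_mul]; omega,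
        ih (fun i hi => ha (i + 1) (by omega))]
      simp

end Nat

theorem rep_eq_sum (x n : ℕ) {l : ℕ} (hl : 0 < l) :
    rep x n l = ∑ j ∈ range n, x * 2 ^ (j * l) := by
  have h2 : 2 ≤ 2 ^ l := Nat.le_self_pow hl.ne' 2
  rw [rep, mul_comm n, pow_mul, ← Nat.geomSum_eq h2, mul_sum]
  simp only [← pow_mul, mul_comm l]

theorem testBit_rep {x l r : ℕ} (hx : x < 2 ^ l) (hr : r < l) (n k : ℕ) :
    (rep x n l).testBit (k * l + r) = (decide (k < n) && x.testBit r) := by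
  rw [rep_eq_sum _ _ (by omega), Nat.testBit_sum_mul_two_pow (fun _ _ => hx) hr]

theorem incrx_eq_sum_general (n l₁ l₂ x : ℕ) (xs : ℕ → ℕ)
    (hl₁ : 1 ≤ l₁) (hl₂ : (n + 1) * l₁ ≤ l₂)
    (hxs : ∀ i < n, xs i < 2 ^ l₁)
    (hx : x = ∑ i ∈ Finset.range n, xs i * 2 ^ (i * l₁)) :
    incrx x n l₁ l₂ = ∑ i ∈ Finset.range n, xs i * 2 ^ (i * l₂) := by
  set d := l₂ - l₁
  have hnd : n * l₁ ≤ d := by rw [add_mul] at hl₂; omega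
  have hxd : x < 2 ^ d :=
    hx ▸ (Nat.sum_mul_two_pow_lt hxs).trans_le (Nat.pow_le_pow_right two_pos hnd)
  have hl : l₁ ≤ l₂ := (Nat.le_mul_of_pos_left l₁ n.succ_pos).trans hl₂
  have hpow : 2 ^ l₁ ≤ 2 ^ l₂ := Nat.pow_le_pow_right two_pos hl
  have hmask : 2 ^ l₁ - 1 < 2 ^ l₂ := by have := Nat.two_pow_pos l₁; omega
  apply Nat.eq_of_testBit_eq
  intro p
  obtain ⟨k, r, hr, rfl⟩ : ∃ k r, r < l₂ ∧ p = k * l₂ + r :=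
    ⟨p / l₂, p % l₂, Nat.mod_lt _ (by nlinarith), (Nat.div_add_mod' p l₂).symm⟩
  rw [incrx, Nat.testBit_and, testBit_rep hmask hr,
    Nat.testBit_sum_mul_two_pow (fun i hi => (hxs i hi).trans_le hpow) hr,
    Nat.testBit_two_pow_sub_one]
  by_cases hk : k < n
  · by_cases hrl : r < l₁
    · have hpos : k * l₂ + r = k * d + (k * l₁ + r) := by
        rw [← show d + l₁ = l₂ by omega]; ring
      have hkd : k * l₁ + r < d := by nlinarith
      rw [hpos, testBit_rep hxd hkd, hx, Nat.testBit_sum_mul_two_pow hxs hrl]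
      simp [hk, hrl]
    · have hr_high : (xs k).testBit r = false :=
        Nat.testBit_lt_two_pow ((hxs k hk).trans_le (Nat.pow_le_pow_right two_pos (by omega)))
      simp [hrl, hr_high]
  · simp [hk]

theorem incrx_eq_sum (n l₁ l₂ x : ℕ) (xs : ℕ → ℕ)
    (hn : 1 ≤ n) (hl₁ : 1 ≤ l₁) (hl₂ : (n + 1) * l₁ ≤ l₂)
    (hxs : ∀ i < n, xs i < 2 ^ l₁)
    (hx : x = ∑ i ∈ Finset.range n, xs i * 2 ^ (i * l₁)) :
    incrx x n l₁ l₂ = ∑ i ∈ Finset.range n, xs i * 2 ^ (i * l₂) :=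
  incrx_eq_sum_general n l₁ l₂ x xs hl₁ hl₂ hxs hx
end

section
/- Let q, l ≥ 1 and let x₀,…,x_{q−1} ∈ {0,1} with x = ∑_{i=0}^{q−1} x_i·2^{i}. Then incr(x,q,l) = ∑_{i=0}^{q−1} x_i·2^{i·l}. -/
def rm (x y : ℕ) : ℕ := if y = 0 then 0 else x % y

def swap1 (x q k m : ℕ) : ℕ :=
  let p := q ^ 2 + q * (m + 1)
  let a := q * p * (k + 1)
  rm ((incrx x q 1 p *
      ((2 ^ (a + k * p) - 2 ^ ((a + k * p) - q * (k * p - m))) /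
        (2 ^ (k * p) - 2 ^ m))) / 2 ^ a) (2 ^ p)

def incr (x q l : ℕ) : ℕ := swap1 x q 1 l

open Finset

lemma sum_mul_two_pow_lt {c n : ℕ} {d : ℕ → ℕ} (hd : ∀ j < n, d j < 2 ^ c) :
    ∑ j ∈ range n, d j * 2 ^ (j * c) < 2 ^ (n * c) := by
  induction n with
  | zero => simp
  | succ n ih =>
    calc ∑ j ∈ range (n + 1), d j * 2 ^ (j * c)
        < 2 ^ (n * c) + d n * 2 ^ (n * c) := by
          rw [sum_range_succ]; exact Nat.add_lt_add_right (ih fun j hj => hd j (by omega)) _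
      _ = (d n + 1) * 2 ^ (n * c) := by ring
      _ ≤ 2 ^ c * 2 ^ (n * c) := Nat.mul_le_mul_right _ (hd n n.lt_succ_self)
      _ = 2 ^ ((n + 1) * c) := by ring

lemma testBit_sum_mul_two_pow {c n j r : ℕ} {d : ℕ → ℕ} (hd : ∀ j < n, d j < 2 ^ c)
    (hj : j < n) (hr : r < c) :
    (∑ i ∈ range n, d i * 2 ^ (i * c)).testBit (j * c + r) = (d j).testBit r := by
  induction n with
  | zero => exact absurd hj (Nat.not_lt_zero j)
  | succ n ih =>
    rw [sum_range_succ, add_comm, mul_comm (d n),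
      Nat.testBit_two_pow_mul_add _ (sum_mul_two_pow_lt fun i hi => hd i (by omega))]
    rcases (Nat.lt_succ_iff_lt_or_eq.mp hj) with hjn | rfl
    · have hlt : j * c + r < n * c := by nlinarith
      rw [if_pos hlt, ih (fun i hi => hd i (by omega)) hjn]
    · rw [if_neg (by omega), Nat.add_sub_cancel_left]

lemma testBit_sum_mul_two_pow_of_le {c n i : ℕ} {d : ℕ → ℕ} (hd : ∀ j < n, d j < 2 ^ c)
    (hi : n * c ≤ i) : (∑ j ∈ range n, d j * 2 ^ (j * c)).testBit i = false :=
  Nat.testBit_eq_false_of_lt ((sum_mul_two_pow_lt hd).trans_le (Nat.pow_le_pow_right two_pos hi))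

lemma land_sum_two_pow_eq {x c q : ℕ} (hx : x < 2 ^ c) (hq : q ≤ c) :
    (x * ∑ j ∈ range q, 2 ^ (j * c)) &&& ∑ j ∈ range q, 2 ^ (j * (c + 1))
      = ∑ j ∈ range q, (x.testBit j).toNat * 2 ^ (j * (c + 1)) := by
  have hA : x * ∑ j ∈ range q, 2 ^ (j * c) = ∑ j ∈ range q, x * 2 ^ (j * c) := mul_sum _ _ _
  have hM : ∑ j ∈ range q, 2 ^ (j * (c + 1)) = ∑ j ∈ range q, 1 * 2 ^ (j * (c + 1)) := by
    simp only [one_mul]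
  have hbit_lt : ∀ d < 2, d < 2 ^ (c + 1) := fun d hd =>
    hd.trans_le (Nat.le_self_pow c.succ_ne_zero 2)
  have hone : ∀ j < q, 1 < 2 ^ (c + 1) := fun _ _ => hbit_lt 1 one_lt_two
  have hdiag : ∀ j < q, (x.testBit j).toNat < 2 ^ (c + 1) := fun j _ =>
    hbit_lt _ (Bool.toNat_lt _)
  apply Nat.eq_of_testBit_eq
  intro i
  obtain ⟨j, r, hr, rfl⟩ : ∃ j r, r < c + 1 ∧ i = j * (c + 1) + r :=
    ⟨i / (c + 1), i % (c + 1), Nat.mod_lt _ c.succ_pos, (Nat.div_add_mod' i (c + 1)).symm⟩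
  rw [Nat.testBit_land, hA, hM]
  rcases lt_or_ge j q with hj | hj
  · rw [testBit_sum_mul_two_pow hone hj hr, testBit_sum_mul_two_pow hdiag hj hr]
    rcases r with _ | r
    · rw [show j * (c + 1) + 0 = j * c + j by ring,
        testBit_sum_mul_two_pow (fun _ _ => hx) hj (by omega)]
      cases x.testBit j <;> rfl
    · have hhigh : ∀ d < 2, d.testBit (r + 1) = false := fun d hd =>
        Nat.testBit_lt_two_pow (hd.trans_le (Nat.le_self_pow r.succ_ne_zero 2))
      rw [hhigh 1 one_lt_two, hhigh _ (Bool.toNat_lt _), Bool.and_false]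
  · have hle : q * (c + 1) ≤ j * (c + 1) + r := by nlinarith
    rw [testBit_sum_mul_two_pow_of_le hone hle, testBit_sum_mul_two_pow_of_le hdiag hle,
      Bool.and_false]

lemma rep_eq_mul_sum (x n : ℕ) {l : ℕ} (hl : 0 < l) :
    rep x n l = x * ∑ j ∈ range n, 2 ^ (j * l) := by
  rw [rep, mul_comm n, pow_mul, ← Nat.geomSum_eq (Nat.le_self_pow hl.ne' 2)]
  simp only [← pow_mul, mul_comm l]

lemma incrx_one_eq {x q p : ℕ} (hx : x < 2 ^ (p - 1)) (hq : q < p) :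
    incrx x q 1 p = ∑ j ∈ range q, (x.testBit j).toNat * 2 ^ (j * p) := by
  obtain ⟨c, rfl⟩ : ∃ c, p = c + 1 := ⟨p - 1, by omega⟩
  rcases c.eq_zero_or_pos with rfl | hc
  · obtain rfl : q = 0 := by omega
    simp [incrx, rep]
  rw [incrx, Nat.add_sub_cancel, rep_eq_mul_sum _ _ hc, rep_eq_mul_sum _ _ c.succ_pos,
    pow_one, Nat.add_one_sub_one, one_mul]
  exact land_sum_two_pow_eq hx (by omega)

lemma toNat_testBit_sum_mul_two_pow {q j : ℕ} {xs : ℕ → ℕ} (hxs : ∀ i < q, xs i ≤ 1)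
    (hj : j < q) : ((∑ i ∈ range q, xs i * 2 ^ i).testBit j).toNat = xs j := by
  have hbit := testBit_sum_mul_two_pow (c := 1) (r := 0)
    (fun i hi => Nat.lt_succ_of_le (hxs i hi)) hj one_pos
  simp only [mul_one, add_zero] at hbit
  rw [hbit, Nat.toNat_testBit, pow_zero, Nat.div_one,
    Nat.mod_eq_of_lt (Nat.lt_succ_of_le (hxs j hj))]

lemma two_pow_sub_two_pow_div {b : ℕ} (hb : 0 < b) (E l n : ℕ) :
    (2 ^ (E + l + n * b) - 2 ^ (E + l)) / (2 ^ (b + l) - 2 ^ l)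
      = 2 ^ E * ∑ t ∈ range n, 2 ^ (t * b) := by
  have h2b : 2 ≤ 2 ^ b := Nat.le_self_pow hb.ne' 2
  have hnum : 2 ^ (E + l + n * b) - 2 ^ (E + l) = 2 ^ l * (2 ^ E * ((2 ^ b) ^ n - 1)) := by
    rw [Nat.mul_sub, Nat.mul_sub, mul_one]
    ring_nf
  have hden : 2 ^ (b + l) - 2 ^ l = 2 ^ l * (2 ^ b - 1) := by
    rw [Nat.mul_sub, mul_one, ← pow_add, add_comm]
  rw [hnum, hden, Nat.mul_div_mul_left _ _ (by positivity),
    Nat.mul_div_assoc _ (Nat.sub_one_dvd_pow_sub_one _ _), ← Nat.geomSum_eq h2b]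
  simp only [← pow_mul, mul_comm b]

lemma div_two_pow_mod_two_pow_eq {L S U a p : ℕ} (hL : L < 2 ^ a) (hS : S < 2 ^ p)
    (hU : 2 ^ (a + p) ∣ U) : (L + 2 ^ a * S + U) / 2 ^ a % 2 ^ p = S := by
  obtain ⟨H, rfl⟩ := hU
  rw [show L + 2 ^ a * S + 2 ^ (a + p) * H = L + 2 ^ a * (S + 2 ^ p * H) by ring,
    Nat.add_mul_div_left _ _ (by positivity), Nat.div_eq_of_lt hL, zero_add,
    Nat.add_mul_mod_self_left, Nat.mod_eq_of_lt hS]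

lemma sum_sum_below_antidiagonal_lt {q b l E : ℕ} {xs : ℕ → ℕ} (hxs : ∀ i < q, xs i ≤ 1)
    (hb : q * q * 2 ^ ((q - 1) * l) < 2 ^ b) :
    ∑ j ∈ range q, ∑ t ∈ range (q - 1 - j), xs j * 2 ^ ((j + t) * b + j * l + E)
      < 2 ^ (E + (q - 1) * b) := by
  set a := E + (q - 1) * b with ha
  have hterm : ∀ j t, j + t + 1 ≤ q - 1 →
      2 ^ b * (xs j * 2 ^ ((j + t) * b + j * l + E)) ≤ 2 ^ (a + (q - 1) * l) := by
    intro j t hjt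
    have h1 : (j + t + 1) * b ≤ (q - 1) * b := Nat.mul_le_mul_right _ hjt
    have h2 : j * l ≤ (q - 1) * l := Nat.mul_le_mul_right _ (by omega)
    calc 2 ^ b * (xs j * 2 ^ ((j + t) * b + j * l + E))
        ≤ 2 ^ b * 2 ^ ((j + t) * b + j * l + E) :=
          Nat.mul_le_mul_left _ (mul_le_of_le_one_left (Nat.zero_le _) (hxs j (by omega)))
      _ ≤ 2 ^ (a + (q - 1) * l) := by
          rw [← pow_add]; exact Nat.pow_le_pow_right two_pos (by linarith [ha])
  refine Nat.lt_of_mul_lt_mul_left (a := 2 ^ b) ?_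
  calc 2 ^ b * ∑ j ∈ range q, ∑ t ∈ range (q - 1 - j), xs j * 2 ^ ((j + t) * b + j * l + E)
      = ∑ j ∈ range q, ∑ t ∈ range (q - 1 - j),
          2 ^ b * (xs j * 2 ^ ((j + t) * b + j * l + E)) := by simp only [mul_sum]
    _ ≤ ∑ j ∈ range q, ∑ t ∈ range (q - 1 - j), 2 ^ (a + (q - 1) * l) :=
        sum_le_sum fun j _ => sum_le_sum fun t ht => hterm j t (by grind)
    _ ≤ ∑ j ∈ range q, q * 2 ^ (a + (q - 1) * l) := sum_le_sum fun j _ => by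
        rw [sum_const, card_range, smul_eq_mul]; exact Nat.mul_le_mul_right _ (by omega)
    _ = q * q * 2 ^ ((q - 1) * l) * 2 ^ a := by
        rw [sum_const, card_range, smul_eq_mul, pow_add]; ring
    _ < 2 ^ b * 2 ^ a := Nat.mul_lt_mul_of_pos_right hb (by positivity)

lemma two_pow_dvd_sum_sum_above_antidiagonal (q b l E : ℕ) (xs : ℕ → ℕ) :
    2 ^ (E + (q - 1) * b + (b + l))
      ∣ ∑ j ∈ range q, ∑ t ∈ Ico (q - j) q, xs j * 2 ^ ((j + t) * b + j * l + E) := by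
  refine dvd_sum fun j hj => dvd_sum fun t ht => Dvd.dvd.mul_left (pow_dvd_pow 2 ?_) _
  obtain ⟨htj, htq⟩ := mem_Ico.mp ht
  have h1 : q * b ≤ (j + t) * b := Nat.mul_le_mul_right _ (by omega)
  have h2 : l ≤ j * l := Nat.le_mul_of_pos_left _ (by omega)
  have h3 : (q - 1) * b + b = q * b := by
    rw [Nat.sub_one_mul, Nat.sub_add_cancel (Nat.le_mul_of_pos_left _ (by omega))]
  omega

lemma sum_mul_geom_sum_div_two_pow_mod {q b l E : ℕ} {xs : ℕ → ℕ}
    (hxs : ∀ i < q, xs i ≤ 1)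
    (hb : q * q * 2 ^ ((q - 1) * l) < 2 ^ b) :
    (∑ j ∈ range q, xs j * 2 ^ (j * (b + l))) * (2 ^ E * ∑ t ∈ range q, 2 ^ (t * b))
        / 2 ^ (E + (q - 1) * b) % 2 ^ (b + l)
      = ∑ j ∈ range q, xs j * 2 ^ (j * l) := by
  set f : ℕ → ℕ → ℕ := fun j t => xs j * 2 ^ ((j + t) * b + j * l + E)
  have hprod :
      (∑ j ∈ range q, xs j * 2 ^ (j * (b + l))) * (2 ^ E * ∑ t ∈ range q, 2 ^ (t * b))
        = ∑ j ∈ range q, ∑ t ∈ range q, f j t := by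
    rw [sum_mul]
    refine sum_congr rfl fun j _ => ?_
    rw [mul_sum, mul_sum]
    refine sum_congr rfl fun t _ => ?_
    ring
  have hsplit : ∀ j ∈ range q, ∑ t ∈ range q, f j t
      = ∑ t ∈ range (q - 1 - j), f j t + f j (q - 1 - j) + ∑ t ∈ Ico (q - j) q, f j t := by
    intro j hj
    rw [← sum_range_succ, show q - 1 - j + 1 = q - j by grind,
      sum_range_add_sum_Ico _ (Nat.sub_le q j)]
  have hmid : ∀ j ∈ range q,
      f j (q - 1 - j) = 2 ^ (E + (q - 1) * b) * (xs j * 2 ^ (j * l)) := by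
    intro j hj
    simp only [f, show j + (q - 1 - j) = q - 1 by grind]
    ring
  have htarget : ∑ j ∈ range q, xs j * 2 ^ (j * l) < 2 ^ (b + l) :=
    calc ∑ j ∈ range q, xs j * 2 ^ (j * l) ≤ ∑ j ∈ range q, 2 ^ ((q - 1) * l) :=
          sum_le_sum fun j hj =>
            (mul_le_of_le_one_left (Nat.zero_le _) (hxs j (mem_range.mp hj))).trans
              (Nat.pow_le_pow_right two_pos (Nat.mul_le_mul_right _ (by grind)))
      _ ≤ q * q * 2 ^ ((q - 1) * l) := by
          rw [sum_const, card_range, smul_eq_mul]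
          exact Nat.mul_le_mul_right _ (Nat.le_mul_self q)
      _ < 2 ^ b := hb
      _ ≤ 2 ^ (b + l) := Nat.pow_le_pow_right two_pos (Nat.le_add_right b l)
  rw [hprod, sum_congr rfl hsplit, sum_add_distrib, sum_add_distrib, sum_congr rfl hmid,
    ← mul_sum]
  exact div_two_pow_mod_two_pow_eq (sum_sum_below_antidiagonal_lt hxs hb) htarget
    (two_pow_dvd_sum_sum_above_antidiagonal q b l E xs)

theorem incr_eq_sum_general (q l x : ℕ) (xs : ℕ → ℕ)
    (hxs : ∀ i < q, xs i ≤ 1)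
    (hx : x = ∑ i ∈ Finset.range q, xs i * 2 ^ i) :
    incr x q l = ∑ i ∈ Finset.range q, xs i * 2 ^ (i * l) := by
  subst hx
  rcases q with _ | n
  · simp [incr, swap1, rm]
  set b := (n + 1) ^ 2 + (n + 1) + n * l
  set E := (n + 2) * b + 2 * (n + 1) * l
  have hp : (n + 1) ^ 2 + (n + 1) * (l + 1) = b + l := by ring
  have ha : (n + 1) * (b + l) * (1 + 1) = E + n * b := by ring
  have hnum : E + n * b + (b + l) = E + l + (n + 1) * b := by ring
  have hbn : n + 2 ≤ b := by nlinarith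
  have hx : ∑ i ∈ range (n + 1), xs i * 2 ^ i < 2 ^ (b + l - 1) := by
    have hlt := sum_mul_two_pow_lt (c := 1) (fun i hi => Nat.lt_succ_of_le (hxs i hi))
    simp only [mul_one] at hlt
    exact hlt.trans_le (Nat.pow_le_pow_right two_pos (by omega))
  have hbits : ∀ j ∈ range (n + 1), ((∑ i ∈ range (n + 1), xs i * 2 ^ i).testBit j).toNat
      * 2 ^ (j * (b + l)) = xs j * 2 ^ (j * (b + l)) := fun j hj => by
    rw [toNat_testBit_sum_mul_two_pow hxs (mem_range.mp hj)]
  have hwidth : (n + 1) * (n + 1) * 2 ^ (n * l) < 2 ^ b :=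
    calc (n + 1) * (n + 1) * 2 ^ (n * l) < 2 ^ ((n + 1) ^ 2) * 2 ^ (n * l) := by
          rw [sq]; exact Nat.mul_lt_mul_of_pos_right Nat.lt_two_pow_self (by positivity)
      _ ≤ 2 ^ b := by rw [← pow_add]; exact Nat.pow_le_pow_right two_pos (by omega)
  simp only [incr, swap1, hp, ha, one_mul, rm, if_neg (NeZero.ne (2 ^ (b + l)))]
  rw [hnum, Nat.add_sub_cancel, Nat.add_sub_cancel, incrx_one_eq hx (by omega),
    sum_congr rfl hbits, two_pow_sub_two_pow_div (by omega)]
  simpa using sum_mul_geom_sum_div_two_pow_mod (E := E) hxs (by simpa using hwidth)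

theorem incr_eq_sum (q l x : ℕ) (xs : ℕ → ℕ) (hq : 1 ≤ q) (hl : 1 ≤ l)
    (hxs : ∀ i < q, xs i ≤ 1)
    (hx : x = ∑ i ∈ Finset.range q, xs i * 2 ^ i) :
    incr x q l = ∑ i ∈ Finset.range q, xs i * 2 ^ (i * l) :=
  incr_eq_sum_general q l x xs hxs hx
end

section
/- For every l ≥ 1, setting S = ⌊(2^{l²} ∸ 1)/(2^{l} ∸ 1)⌋ (so that S = ∑_{i=0}^{l−1} 2^{i·l}), one has S² = ∑_{i=0}^{l−1} (i+1)·2^{i·l} + ∑_{i=l}^{2·l−2} (2·l−1−i)·2^{i·l}, and consequently rm(⌊S² / 2^{l·(l−1)}⌋, 2^{l}) = l. -/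
open Finset

namespace Nat

theorem card_filter_add_eq_range_product (n k : ℕ) :
    #{p ∈ range n ×ˢ range n | p.1 + p.2 = k} = min (k + 1) (2 * n - 1 - k) := by
  have himage : {p ∈ range n ×ˢ range n | p.1 + p.2 = k}
      = (Ico (k + 1 - n) (min (k + 1) n)).image fun i => (i, k - i) := by
    ext ⟨i, j⟩
    simp only [mem_filter, mem_product, mem_range, mem_image, mem_Ico, Prod.mk.injEq]
    constructor
    · rintro ⟨⟨hi, hj⟩, hij⟩
      exact ⟨i, by omega, rfl, by omega⟩
    · rintro ⟨i', hi', rfl, rfl⟩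
      omega
  rw [himage, Finset.card_image_of_injective _ fun a b h => (Prod.mk.inj h).1, card_Ico]
  omega

theorem sq_sum_range_pow_eq_sum_min (x n : ℕ) :
    (∑ i ∈ range n, x ^ i) ^ 2
      = ∑ k ∈ range (2 * n - 1), min (k + 1) (2 * n - 1 - k) * x ^ k := by
  have hmaps : ∀ p ∈ range n ×ˢ range n, p.1 + p.2 ∈ range (2 * n - 1) := by
    intro p hp
    simp only [mem_product, mem_range] at hp ⊢
    omega
  calc (∑ i ∈ range n, x ^ i) ^ 2
      = ∑ p ∈ range n ×ˢ range n, x ^ (p.1 + p.2) := by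
        simp only [sq, sum_mul_sum, ← sum_product', pow_add]
    _ = ∑ k ∈ range (2 * n - 1), ∑ p ∈ range n ×ˢ range n with p.1 + p.2 = k, x ^ k := by
        rw [← sum_fiberwise_of_maps_to hmaps]
        refine sum_congr rfl fun k _ => sum_congr rfl fun p hp => ?_
        rw [(mem_filter.mp hp).2]
    _ = _ := by
        refine sum_congr rfl fun k _ => ?_
        rw [sum_const, card_filter_add_eq_range_product n k, smul_eq_mul]

theorem sq_sum_range_pow (x n : ℕ) :
    (∑ i ∈ range n, x ^ i) ^ 2
      = ∑ i ∈ range n, (i + 1) * x ^ i + ∑ i ∈ Ico n (2 * n - 1), (2 * n - 1 - i) * x ^ i := by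
  rw [sq_sum_range_pow_eq_sum_min, ← sum_range_add_sum_Ico _ (by omega : n ≤ 2 * n - 1)]
  congr 1 <;> refine sum_congr rfl fun k hk => ?_ <;> simp only [mem_range, mem_Ico] at hk <;>
    congr 1 <;> omega

theorem sum_range_mul_pow_lt (b n : ℕ) (c : ℕ → ℕ) (hc : ∀ i < n, c i < b) :
    ∑ i ∈ range n, c i * b ^ i < b ^ n := by
  induction n with
  | zero => simp
  | succ n ih =>
    rw [sum_range_succ, pow_succ]
    have hlow := ih fun i hi => hc i (by omega)
    have htop : (c n + 1) * b ^ n ≤ b * b ^ n := Nat.mul_le_mul_right _ (hc n (by omega))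
    nlinarith

theorem sq_sum_range_pow_div_pow_mod (x n : ℕ) (hn : 1 ≤ n) (hx : n < x) :
    (∑ i ∈ range n, x ^ i) ^ 2 / x ^ (n - 1) % x = n := by
  set low := ∑ i ∈ range (n - 1), (i + 1) * x ^ i
  have hlow : low < x ^ (n - 1) := sum_range_mul_pow_lt x (n - 1) _ fun i hi => by omega
  obtain ⟨high, hhigh⟩ : x ^ (n - 1) * x ∣ ∑ i ∈ Ico n (2 * n - 1), (2 * n - 1 - i) * x ^ i := by
    refine dvd_sum fun i hi => Dvd.dvd.mul_left ?_ _
    rw [← pow_succ]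
    exact pow_dvd_pow x (by simp only [mem_Ico] at hi; omega)
  have hdigits : (∑ i ∈ range n, x ^ i) ^ 2 = low + x ^ (n - 1) * (n + x * high) := by
    obtain ⟨m, rfl⟩ : ∃ m, n = m + 1 := ⟨n - 1, by omega⟩
    rw [sq_sum_range_pow, sum_range_succ, hhigh]
    simp only [add_tsub_cancel_right, low]
    ring
  rw [hdigits, add_mul_div_left _ _ (pow_pos (by omega) _), div_eq_of_lt hlow, zero_add,
    add_mul_mod_self_left, mod_eq_of_lt hx]

end Nat

theorem geom_square (l : ℕ) (hl : 1 ≤ l) (S : ℕ)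
    (hS : S = (2 ^ l ^ 2 - 1) / (2 ^ l - 1)) :
    S = ∑ i ∈ Finset.range l, 2 ^ (i * l) ∧
    S ^ 2 = (∑ i ∈ Finset.range l, (i + 1) * 2 ^ (i * l)) +
      ∑ i ∈ Finset.Ico l (2 * l - 1), (2 * l - 1 - i) * 2 ^ (i * l) ∧
    rm (S ^ 2 / 2 ^ (l * (l - 1))) (2 ^ l) = l := by
  have hS' : S = ∑ i ∈ range l, (2 ^ l) ^ i := by
    rw [hS, Nat.geomSum_eq (Nat.le_self_pow (by omega) 2), ← pow_mul, sq]
  have hpow : ∀ i, 2 ^ (i * l) = (2 ^ l) ^ i := fun i => pow_mul' 2 i l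
  simp only [hpow, pow_mul 2 l (l - 1)]
  refine ⟨hS', by rw [hS', Nat.sq_sum_range_pow], ?_⟩
  rw [rm, if_neg (by positivity), hS', Nat.sq_sum_range_pow_div_pow_mod _ _ hl Nat.lt_two_pow_self]
end

section
/- Define g(z) = 2^{⌊log₂(2·z)⌋²}. Then for all x, y ∈ ℕ: x·y = ⌊g(g(x+y)) / ⌊⌊g(g(x+y))/x⌋ / y⌋⌋. In particular, multiplication is recoverable from the successor-free operations of addition, integer division, and the function 2^{⌊log₂ z⌋²}. -/
/-!
For `m ^ 2 ≤ N`, dividing `N` by the quotient `N / m` gives back `m` exactly: writing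
`N = q m + r` with `r < m ≤ q`, the remainder is too small to add one more `q`.
Since `⌊N / x⌋ / y = ⌊N / (x y)⌋`, it therefore suffices that `N = g (g (x + y))` is at least
`(x y) ^ 2`, and indeed `g (g z) = 2 ^ (k ^ 2 + 1) ^ 2` with `z < 2 ^ k` exceeds `z ^ 4`.
-/

def g (z : ℕ) : ℕ := 2 ^ (Nat.log 2 (2 * z)) ^ 2

theorem Nat.div_div_self_of_sq_le {N m : ℕ} (h : m ^ 2 ≤ N) : N / (N / m) = m := by
  rcases Nat.eq_zero_or_pos m with rfl | hm
  · simp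
  have hmq : m ≤ N / m := (Nat.le_div_iff_mul_le hm).2 (by simpa [sq] using h)
  apply Nat.div_eq_of_lt_le
  · exact (mul_comm m _).le.trans (Nat.div_mul_le_self N m)
  · calc N = N / m * m + N % m := (Nat.div_add_mod' N m).symm
      _ < N / m * m + N / m := by have := Nat.mod_lt N hm; omega
      _ = (m + 1) * (N / m) := by ring

theorem lt_two_pow_log_two_two_mul (z : ℕ) : z < 2 ^ Nat.log 2 (2 * z) := by
  have h := Nat.lt_pow_succ_log_self (b := 2) (by norm_num) (2 * z)
  rw [pow_succ] at h
  omega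

theorem g_g (z : ℕ) : g (g z) = 2 ^ (Nat.log 2 (2 * z) ^ 2 + 1) ^ 2 := by
  rw [g, g, ← pow_succ', Nat.log_pow (by norm_num)]

theorem pow_four_lt_g_g (z : ℕ) : z ^ 4 < g (g z) := by
  set k := Nat.log 2 (2 * z)
  have hexp : 4 * k ≤ (k ^ 2 + 1) ^ 2 := by
    rcases Nat.eq_zero_or_pos k with hk | hk
    · simp [hk]
    · nlinarith [sq_nonneg (k ^ 2 - 1 : ℤ), sq_nonneg (k - 1 : ℤ)]
  calc z ^ 4 < (2 ^ k) ^ 4 := Nat.pow_lt_pow_left (lt_two_pow_log_two_two_mul z) (by norm_num)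
    _ = 2 ^ (4 * k) := by rw [← pow_mul, mul_comm]
    _ ≤ 2 ^ (k ^ 2 + 1) ^ 2 := Nat.pow_le_pow_right (by norm_num) hexp
    _ = g (g z) := (g_g z).symm

theorem mul_from_div (x y : ℕ) :
    x * y = g (g (x + y)) / (g (g (x + y)) / x / y) := by
  have hxy : x * y ≤ (x + y) ^ 2 := by
    rw [sq]; exact Nat.mul_le_mul (Nat.le_add_right x y) (Nat.le_add_left y x)
  have hsq : (x * y) ^ 2 ≤ g (g (x + y)) :=
    calc (x * y) ^ 2 ≤ ((x + y) ^ 2) ^ 2 := Nat.pow_le_pow_left hxy 2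
      _ = (x + y) ^ 4 := by ring
      _ ≤ g (g (x + y)) := (pow_four_lt_g_g (x + y)).le
  rw [Nat.div_div_eq_div_mul, Nat.div_div_self_of_sq_le hsq]
end

section
/- Let c, r ≥ 1, let u₀,…,u_{r−1} ∈ ℕ with u_i < 2^{c} for all i, and set p = ∑_{i=0}^{r−1} u_i·2^{c·i}. Assume 2^{c·r−1} ≤ p (i.e. the binary representation of p has exactly c·r digits). Then for every t ∈ ℕ: rm(R(p, c·t), 2^{c}) = u_{t mod r}. -/
/-- Cyclic shift of the binary representation of `x` by `y` positions to the right. -/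
def R (x y : ℕ) : ℕ :=
  if x ≤ 1 then x
  else ∑ j ∈ Finset.range (Nat.log 2 x + 1),
    (if x.testBit ((j + y) % (Nat.log 2 x + 1)) then 1 else 0) * 2 ^ j

/-!
Once `p ≥ 2^(c·r-1)` pins the top bit of `p` at position `c·r - 1`, `R p y` is the number whose
`j`-th bit is bit `(j + y) mod c·r` of `p`. A shift by `c·t` therefore brings bits
`c·k, …, c·k + c - 1` of `p`, with `k = t mod r`, down to the lowest `c` positions, and these
form the base-`2^c` digit `p / (2^c)^k % 2^c = u k`.
-/

open Finset

lemma R_eq_sum (x y : ℕ) :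
    R x y = ∑ j ∈ range (Nat.log 2 x + 1),
      (if x.testBit ((j + y) % (Nat.log 2 x + 1)) then 1 else 0) * 2 ^ j := by
  unfold R
  split_ifs with hx
  · interval_cases x <;> simp [Nat.mod_one]
  · rfl

lemma testBit_sum_range_bits (f : ℕ → Bool) (n i : ℕ) :
    (∑ j ∈ range n, (if f j then 1 else 0) * 2 ^ j).testBit i = (decide (i < n) && f i) := by
  induction n generalizing f i with
  | zero => simp
  | succ n ih =>
    have hbit : ∑ j ∈ range (n + 1), (if f j then 1 else 0) * 2 ^ j
        = Nat.bit (f 0) (∑ j ∈ range n, (if f (j + 1) then 1 else 0) * 2 ^ j) := by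
      rw [sum_range_succ', Nat.bit_val, mul_sum]
      cases f 0 <;> simp [pow_succ, mul_comm]
    rw [hbit]
    rcases i with _ | i
    · simp
    · rw [Nat.testBit_bit_succ, ih]
      simp

lemma sum_range_succ_mul_pow (u : ℕ → ℕ) (b r : ℕ) :
    ∑ k ∈ range (r + 1), u k * b ^ k = u 0 + b * ∑ k ∈ range r, u (k + 1) * b ^ k := by
  rw [sum_range_succ', mul_sum, add_comm, pow_zero, mul_one]
  congr 1
  exact sum_congr rfl fun k _ => by ring

lemma sum_mul_pow_lt {u : ℕ → ℕ} {b r : ℕ} (hu : ∀ k < r, u k < b) :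
    ∑ k ∈ range r, u k * b ^ k < b ^ r := by
  induction r with
  | zero => simp
  | succ r ih =>
    have hr := hu r r.lt_succ_self
    calc ∑ k ∈ range (r + 1), u k * b ^ k
        = ∑ k ∈ range r, u k * b ^ k + u r * b ^ r := sum_range_succ _ _
      _ < (u r + 1) * b ^ r := by
          linarith [ih fun k hk => hu k (hk.trans r.lt_succ_self)]
      _ ≤ b ^ (r + 1) := by rw [pow_succ']; exact Nat.mul_le_mul_right _ hr

lemma sum_mul_pow_div_pow_mod {u : ℕ → ℕ} {b r i : ℕ} (hu : ∀ k < r, u k < b) (hi : i < r) :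
    (∑ k ∈ range r, u k * b ^ k) / b ^ i % b = u i := by
  induction i generalizing u r with
  | zero =>
    obtain ⟨r, rfl⟩ := Nat.exists_eq_add_of_lt hi
    rw [pow_zero, Nat.div_one, sum_range_succ_mul_pow, Nat.add_mul_mod_self_left]
    exact Nat.mod_eq_of_lt (hu 0 (by omega))
  | succ i ih =>
    obtain ⟨r, rfl⟩ : ∃ r', r = r' + 1 := ⟨r - 1, by omega⟩
    have hb : 0 < b := (Nat.zero_le _).trans_lt (hu 0 (by omega))
    rw [sum_range_succ_mul_pow, pow_succ', ← Nat.div_div_eq_div_mul,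
      Nat.add_mul_div_left _ _ hb, Nat.div_eq_of_lt (hu 0 (by omega)), zero_add]
    exact ih (fun k hk => hu (k + 1) (by omega)) (by omega)

lemma add_mul_mod_mul_of_lt {i c : ℕ} (hi : i < c) (t r : ℕ) :
    (i + c * t) % (c * r) = i + c * (t % r) := by
  have hc : 0 < c := (Nat.zero_le i).trans_lt hi
  rw [Nat.mod_mul, Nat.add_mul_mod_self_left, Nat.mod_eq_of_lt hi, Nat.add_mul_div_left _ _ hc,
    Nat.div_eq_of_lt hi, zero_add]

lemma log_two_add_one_eq {n p : ℕ} (hn : 0 < n) (hlo : 2 ^ (n - 1) ≤ p) (hhi : p < 2 ^ n) :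
    Nat.log 2 p + 1 = n := by
  rw [Nat.log_eq_of_pow_le_of_lt_pow hlo (by rwa [Nat.sub_add_cancel hn])]
  omega

theorem rm_R_blocks (c r : ℕ) (hc : 1 ≤ c) (hr : 1 ≤ r) (u : ℕ → ℕ)
    (hu : ∀ i < r, u i < 2 ^ c) (p : ℕ)
    (hp : p = ∑ i ∈ Finset.range r, u i * 2 ^ (c * i))
    (hlen : 2 ^ (c * r - 1) ≤ p) (t : ℕ) :
    rm (R p (c * t)) (2 ^ c) = u (t % r) := by
  simp only [pow_mul] at hp
  have hlog : Nat.log 2 p + 1 = c * r :=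
    log_two_add_one_eq (Nat.mul_pos hc hr) hlen (by rw [hp, pow_mul]; exact sum_mul_pow_lt hu)
  have hblock : p / (2 ^ c) ^ (t % r) % 2 ^ c = u (t % r) := by
    rw [hp]; exact sum_mul_pow_div_pow_mod hu (Nat.mod_lt t hr)
  rw [rm, if_neg (by positivity), ← hblock, ← pow_mul]
  refine Nat.eq_of_testBit_eq fun i => ?_
  rw [R_eq_sum, hlog, Nat.testBit_mod_two_pow, Nat.testBit_mod_two_pow, testBit_sum_range_bits,
    Nat.testBit_div_two_pow]
  by_cases hi : i < c
  · have hicr : i < c * r := hi.trans_le (Nat.le_mul_of_pos_right c hr)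
    simp [hi, hicr, add_mul_mod_mul_of_lt hi]
  · simp [hi]
end

section
/- Let r ≥ 1 and u₀,…,u_{r−1}, v₀,…,v_{r−1} ∈ ℕ, and for each i ∈ ℕ define f_i : ℕ → ℕ by: f_i(x) = x if i mod r = r−1; otherwise f_i(x) = x + v_{i mod r} when x ∧ u_{i mod r} = 0, and f_i(x) = x when x ∧ u_{i mod r} ≠ 0. Suppose t₀, p₁, p₂, c₁, c₂, x ∈ ℕ satisfy: t₀ ≥ 1; u_{r−1} = 2^{c₁} − 1; 2^{c₂−1} ≤ v_{r−1} < 2^{c₂}; p₁ = ∑_{i=0}^{r−1} 2^{c₁·i}·u_i; p₂ = ∑_{i=0}^{r−1} 2^{c₂·i}·v_i; x + 2·p₂·t₀ < 2^{c₁}; x + t₀·max(v₀,…,v_{r−2}) < 2^{c₂} (where the maximum over the empty list, arising when r = 1, is 0); u_i < 2^{c₂} for all 0 ≤ i ≤ r−2; c₁ ≥ c₂; and x ≥ 1. Then Q(x,p₁,p₂,c₁,c₂,t₀) mod 2^{c₂} = f_{t₀−1}(f_{t₀−2}(⋯ f_0(x) ⋯)). -/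
def Q (x p₁ p₂ c₁ c₂ : ℕ) : ℕ → ℕ
  | 0 => x
  | t + 1 =>
    if Q x p₁ p₂ c₁ c₂ t &&& R p₁ (c₁ * t) ≠ 0 then Q x p₁ p₂ c₁ c₂ t
    else Q x p₁ p₂ c₁ c₂ t + R p₂ (c₂ * t)

/-- `iter f x t = f_{t-1}(f_{t-2}(⋯ f_0(x) ⋯))`. -/
def iter (f : ℕ → ℕ → ℕ) (x : ℕ) : ℕ → ℕ
  | 0 => x
  | t + 1 => f t (iter f x t)

open Finset

theorem ofBits_eq_sum_range (b : ℕ → Bool) (n : ℕ) :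
    Nat.ofBits (fun j : Fin n => b j) = ∑ j ∈ range n, (if b j then 1 else 0) * 2 ^ j := by
  induction n generalizing b with
  | zero => simp
  | succ n ih =>
    have hshift := ih fun j => b (j + 1)
    rw [Nat.ofBits_succ, sum_range_succ']
    simp only [Function.comp_def, Fin.val_succ, hshift, Fin.val_zero, pow_succ, mul_sum]
    cases b 0 <;> simp [mul_comm, add_comm]

theorem and_mod_two_pow_of_lt {a c d : ℕ} (hd : d < 2 ^ c) : a % 2 ^ c &&& d = a &&& d := by
  have hand : a &&& d < 2 ^ c := Nat.and_le_right.trans_lt hd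
  rw [← Nat.mod_eq_of_lt hand, Nat.and_mod_two_pow, Nat.mod_eq_of_lt hd]

theorem add_mul_mod_mul {c r j : ℕ} (hj : j < c) (t : ℕ) :
    (j + c * t) % (c * r) = c * (t % r) + j := by
  rcases Nat.eq_zero_or_pos r with rfl | hr
  · simp [add_comm]
  have hsplit : j + c * t = c * (t % r) + j + c * r * (t / r) := by
    nth_rw 1 [← Nat.mod_add_div t r]; ring
  rw [hsplit, Nat.add_mul_mod_self_left, Nat.mod_eq_of_lt]
  calc c * (t % r) + j < c * (t % r + 1) := by rw [mul_add_one]; omega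
    _ ≤ c * r := Nat.mul_le_mul_left _ (Nat.mod_lt _ hr)

theorem R_eq_ofBits (x y : ℕ) :
    R x y = Nat.ofBits fun j : Fin (Nat.log 2 x + 1) => x.testBit ((j + y) % (Nat.log 2 x + 1)) := by
  rw [ofBits_eq_sum_range (fun j => x.testBit ((j + y) % (Nat.log 2 x + 1))), R]
  split_ifs with hx
  · -- for `x ≤ 1` the general formula also returns `x`
    interval_cases x <;> simp [Nat.mod_one]
  · rfl

theorem testBit_R {x y j : ℕ} (hj : j < Nat.log 2 x + 1) :
    (R x y).testBit j = x.testBit ((j + y) % (Nat.log 2 x + 1)) := by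
  rw [R_eq_ofBits, Nat.testBit_ofBits_lt _ _ hj]

theorem R_le_two_mul (x y : ℕ) : R x y ≤ 2 * x := by
  rcases eq_or_ne x 0 with rfl | hx
  · simp [R]
  calc R x y ≤ 2 ^ (Nat.log 2 x + 1) := by rw [R_eq_ofBits]; exact (Nat.ofBits_lt_two_pow _).le
    _ ≤ 2 * x := by rw [pow_succ']; exact Nat.mul_le_mul_left 2 (Nat.pow_log_le_self 2 hx)

def blockSum (c r : ℕ) (w : ℕ → ℕ) : ℕ :=
  ∑ i ∈ range r, 2 ^ (c * i) * w i

theorem blockSum_add (c k m : ℕ) (w : ℕ → ℕ) :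
    blockSum c (k + m) w = blockSum c k w + 2 ^ (c * k) * blockSum c m fun i => w (k + i) := by
  simp only [blockSum, sum_range_add, mul_sum, mul_add, pow_add, mul_assoc]

section blockSum

variable {c r : ℕ} {w : ℕ → ℕ}

theorem blockSum_lt (hw : ∀ i < r, w i < 2 ^ c) : blockSum c r w < 2 ^ (c * r) := by
  induction r with
  | zero => simp [blockSum]
  | succ r ih =>
    have hlow := ih fun i hi => hw i (by omega)
    calc blockSum c (r + 1) w = blockSum c r w + 2 ^ (c * r) * w r := sum_range_succ _ _
      _ < 2 ^ (c * r) * (w r + 1) := by rw [mul_add_one]; omega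
      _ ≤ 2 ^ (c * r) * 2 ^ c := Nat.mul_le_mul_left _ (hw r r.lt_add_one)
      _ = 2 ^ (c * (r + 1)) := by ring

theorem blockSum_div_two_pow_mod {k : ℕ} (hk : k < r) (hw : ∀ i < r, w i < 2 ^ c) :
    blockSum c r w / 2 ^ (c * k) % 2 ^ c = w k := by
  obtain ⟨m, rfl⟩ : ∃ m, r = k + (1 + m) := ⟨r - k - 1, by omega⟩
  rw [blockSum_add, Nat.add_mul_div_left _ _ (by positivity),
    Nat.div_eq_of_lt (blockSum_lt fun i hi => hw i (by omega)), zero_add, blockSum_add, mul_one,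
    Nat.add_mul_mod_self_left]
  simpa [blockSum] using Nat.mod_eq_of_lt (hw k (by omega))

theorem testBit_blockSum {k j : ℕ} (hk : k < r) (hj : j < c) (hw : ∀ i < r, w i < 2 ^ c) :
    (blockSum c r w).testBit (c * k + j) = (w k).testBit j := by
  rw [← blockSum_div_two_pow_mod hk hw, Nat.testBit_mod_two_pow, Nat.testBit_div_two_pow,
    add_comm, decide_eq_true hj, Bool.true_and]

theorem log_blockSum (hc : c ≠ 0) (hr : r ≠ 0) (hw : ∀ i < r, w i < 2 ^ c)
    (htop : 2 ^ (c - 1) ≤ w (r - 1)) : Nat.log 2 (blockSum c r w) + 1 = c * r := by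
  obtain ⟨c, rfl⟩ : ∃ c', c = c' + 1 := ⟨c - 1, by omega⟩
  obtain ⟨r, rfl⟩ : ∃ r', r = r' + 1 := ⟨r - 1, by omega⟩
  have hcr : (c + 1) * (r + 1) = (c + 1) * r + c + 1 := by ring
  rw [hcr, Nat.log_eq_of_pow_le_of_lt_pow _ (hcr ▸ blockSum_lt hw)]
  calc 2 ^ ((c + 1) * r + c) = 2 ^ ((c + 1) * r) * 2 ^ c := pow_add _ _ _
    _ ≤ 2 ^ ((c + 1) * r) * w r := Nat.mul_le_mul_left _ htop
    _ ≤ blockSum (c + 1) (r + 1) w := by rw [blockSum, sum_range_succ]; exact Nat.le_add_left _ _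

theorem R_blockSum_mul_mod (hc : c ≠ 0) (hr : r ≠ 0) (hw : ∀ i < r, w i < 2 ^ c)
    (htop : 2 ^ (c - 1) ≤ w (r - 1)) (t : ℕ) :
    R (blockSum c r w) (c * t) % 2 ^ c = w (t % r) := by
  have hlog := log_blockSum hc hr hw htop
  have htr : t % r < r := t.mod_lt (Nat.pos_of_ne_zero hr)
  apply Nat.eq_of_testBit_eq
  intro j
  rw [Nat.testBit_mod_two_pow]
  by_cases hj : j < c
  · have hjL : j < Nat.log 2 (blockSum c r w) + 1 :=
      hlog ▸ hj.trans_le (Nat.le_mul_of_pos_right c (Nat.pos_of_ne_zero hr))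
    rw [decide_eq_true hj, Bool.true_and, testBit_R hjL, hlog, add_mul_mod_mul hj,
      testBit_blockSum htr hj hw]
  · rw [decide_eq_false hj, Bool.false_and, Nat.testBit_lt_two_pow
      ((hw _ htr).trans_le (Nat.pow_le_pow_right two_pos (not_lt.mp hj)))]

end blockSum

section Q

variable {x p₁ p₂ c₁ c₂ t : ℕ}

theorem le_Q : x ≤ Q x p₁ p₂ c₁ c₂ t := by
  induction t with
  | zero => exact le_rfl
  | succ t ih => rw [Q]; split_ifs <;> omega

theorem Q_le : Q x p₁ p₂ c₁ c₂ t ≤ x + 2 * p₂ * t := by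
  induction t with
  | zero => exact le_rfl
  | succ t ih =>
    have := R_le_two_mul p₂ (c₂ * t)
    rw [Q, mul_add_one]
    split_ifs <;> omega

theorem Q_succ_eq {a : ℕ} (hq : Q x p₁ p₂ c₁ c₂ t < 2 ^ c₁)
    (ha : R p₁ (c₁ * t) % 2 ^ c₁ = a) :
    Q x p₁ p₂ c₁ c₂ (t + 1) = if Q x p₁ p₂ c₁ c₂ t &&& a ≠ 0 then Q x p₁ p₂ c₁ c₂ t
      else Q x p₁ p₂ c₁ c₂ t + R p₂ (c₂ * t) := by
  rw [Q, ← ha, Nat.and_comm _ (_ % _), and_mod_two_pow_of_lt hq, Nat.and_comm]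

theorem Q_succ_of_mask_eq (hx : 0 < x) (hq : Q x p₁ p₂ c₁ c₂ t < 2 ^ c₁)
    (hmask : R p₁ (c₁ * t) % 2 ^ c₁ = 2 ^ c₁ - 1) :
    Q x p₁ p₂ c₁ c₂ (t + 1) = Q x p₁ p₂ c₁ c₂ t := by
  have hq₀ : Q x p₁ p₂ c₁ c₂ t ≠ 0 := (hx.trans_le le_Q).ne'
  rw [Q_succ_eq hq hmask, Nat.and_two_pow_sub_one_eq_mod, Nat.mod_eq_of_lt hq, if_pos hq₀]

theorem Q_succ_modEq {a b y : ℕ} (hq : Q x p₁ p₂ c₁ c₂ t < 2 ^ c₁)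
    (hy : Q x p₁ p₂ c₁ c₂ t ≡ y [MOD 2 ^ c₂]) (ha : R p₁ (c₁ * t) % 2 ^ c₁ = a)
    (ha₂ : a < 2 ^ c₂) (hb : R p₂ (c₂ * t) % 2 ^ c₂ = b) :
    Q x p₁ p₂ c₁ c₂ (t + 1) ≡ if y &&& a = 0 then y + b else y [MOD 2 ^ c₂] := by
  have hand : Q x p₁ p₂ c₁ c₂ t &&& a = y &&& a := by
    rw [← and_mod_two_pow_of_lt ha₂, hy, and_mod_two_pow_of_lt ha₂]
  rw [Q_succ_eq hq ha, hand]
  by_cases h : y &&& a = 0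
  · simp only [h, ne_eq, not_true_eq_false, if_false, if_true]
    exact hy.add (hb ▸ (Nat.mod_modEq _ _).symm)
  · simpa only [h, ne_eq, not_false_eq_true, if_true, if_false] using hy

end Q

theorem iter_le {f : ℕ → ℕ → ℕ} {S : ℕ} (hf : ∀ i y, f i y ≤ y + S) (x t : ℕ) :
    iter f x t ≤ x + t * S := by
  induction t with
  | zero => simp [iter]
  | succ t ih => rw [iter, add_one_mul]; have := hf t (iter f x t); omega

theorem Q_modEq_iter {x p₁ p₂ c₁ c₂ r t₀ : ℕ} {u v : ℕ → ℕ} {f : ℕ → ℕ → ℕ}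
    (hf : ∀ i y, f i y =
      if i % r = r - 1 then y
      else if y &&& u (i % r) = 0 then y + v (i % r) else y)
    (hr : 0 < r) (hx : 0 < x) (hQ : x + 2 * p₂ * t₀ < 2 ^ c₁)
    (hu : u (r - 1) = 2 ^ c₁ - 1) (hub : ∀ i < r - 1, u i < 2 ^ c₂)
    (hmask : ∀ t, R p₁ (c₁ * t) % 2 ^ c₁ = u (t % r))
    (hincr : ∀ t, R p₂ (c₂ * t) % 2 ^ c₂ = v (t % r)) :
    ∀ t ≤ t₀, Q x p₁ p₂ c₁ c₂ t ≡ iter f x t [MOD 2 ^ c₂] := by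
  intro t
  induction t with
  | zero => intro; rfl
  | succ t ih =>
    intro ht
    have hq : Q x p₁ p₂ c₁ c₂ t < 2 ^ c₁ :=
      Q_le.trans_lt (lt_of_le_of_lt (by gcongr; omega) hQ)
    rw [iter, hf]
    by_cases hlast : t % r = r - 1
    · rw [if_pos hlast, Q_succ_of_mask_eq hx hq (by rw [hmask, hlast, hu])]
      exact ih (by omega)
    · have := t.mod_lt hr
      rw [if_neg hlast]
      exact Q_succ_modEq hq (ih (by omega)) (hmask t) (hub _ (by omega)) (hincr t)

theorem Q_main_property (r : ℕ) (hr : 1 ≤ r) (u v : ℕ → ℕ)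
    (f : ℕ → ℕ → ℕ)
    (hf : ∀ i x, f i x =
      if i % r = r - 1 then x
      else if x &&& u (i % r) = 0 then x + v (i % r) else x)
    (t₀ p₁ p₂ c₁ c₂ x : ℕ)
    (ht₀ : 1 ≤ t₀)
    (hu : u (r - 1) = 2 ^ c₁ - 1)
    (hv₁ : 2 ^ (c₂ - 1) ≤ v (r - 1)) (hv₂ : v (r - 1) < 2 ^ c₂)
    (hp₁ : p₁ = ∑ i ∈ Finset.range r, 2 ^ (c₁ * i) * u i)
    (hp₂ : p₂ = ∑ i ∈ Finset.range r, 2 ^ (c₂ * i) * v i)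
    (hx₁ : x + 2 * p₂ * t₀ < 2 ^ c₁)
    (hx₂ : x + t₀ * ((Finset.range (r - 1)).sup v) < 2 ^ c₂)
    (hub : ∀ i < r - 1, u i < 2 ^ c₂)
    (hc : c₂ ≤ c₁) (hx : 1 ≤ x) :
    Q x p₁ p₂ c₁ c₂ t₀ % 2 ^ c₂ = iter f x t₀ := by
  set S := (range (r - 1)).sup v
  have hvS : ∀ i < r - 1, v i ≤ S := fun i hi => le_sup (mem_range.mpr hi)
  have hc₂ : c₂ ≠ 0 := by rintro rfl; simp at hv₁ hv₂; omega
  have hv : ∀ i < r, v i < 2 ^ c₂ := fun i hi => by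
    rcases (by omega : i < r - 1 ∨ i = r - 1) with hi | rfl
    · nlinarith [hvS i hi]
    · exact hv₂
  have hu' : ∀ i < r, u i < 2 ^ c₁ := fun i hi => by
    rcases (by omega : i < r - 1 ∨ i = r - 1) with hi | rfl
    · exact (hub i hi).trans_le (Nat.pow_le_pow_right two_pos hc)
    · rw [hu]; exact Nat.sub_lt (by positivity) one_pos
  have hutop : 2 ^ (c₁ - 1) ≤ u (r - 1) := by
    have := mul_pow_sub_one (show c₁ ≠ 0 by omega) 2
    have := Nat.one_le_two_pow (n := c₁ - 1)
    omega
  have hiter : iter f x t₀ < 2 ^ c₂ := by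
    refine (iter_le (fun i y => ?_) x t₀).trans_lt hx₂
    have := i.mod_lt hr
    rw [hf]
    split_ifs <;> first | omega | exact Nat.add_le_add_left (hvS _ (by omega)) y
  rw [← blockSum] at hp₁ hp₂
  subst hp₁ hp₂
  rw [Q_modEq_iter hf hr hx hx₁ hu hub (R_blockSum_mul_mod (by omega) (by omega) hu' hutop)
    (R_blockSum_mul_mod hc₂ (by omega) hv hv₁) t₀ le_rfl, Nat.mod_eq_of_lt hiter]
end

section
/- Let n ≥ 1 and 1 ≤ i ≤ n. For each j with 1 ≤ j ≤ 2n define α_j = (2^{2n+1} + 2^{j} − 2^{i}) mod 2^{2n+1} and β_j = (2^{2n+1} + 2^{j} − 2^{i+n}) mod 2^{2n+1}. Then the 8n − 2 numbers consisting of 0, 1, the numbers α_j and α_j + 1 for all j ∈ {1,…,2n} with j ≠ i, and the numbers β_j and β_j + 1 for all j ∈ {1,…,2n} with j ≠ i+n, are pairwise distinct. -/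
/-!
For `1 ≤ j, s ≤ m`, the number `(2 ^ (m + 1) + 2 ^ j - 2 ^ s) % 2 ^ (m + 1)` is the residue
of `2 ^ j - 2 ^ s`; it is even, and since every power involved is at most half the modulus,
two such residues coincide exactly when `2 ^ j + 2 ^ t = 2 ^ k + 2 ^ s`. A sum of two powers of
two determines its exponents (binary expansion), so the even numbers `0`, `α_j`, `β_j`
are pairwise distinct, and pairing each even `a` with `a + 1` doubles their count `4n - 1`.
-/

namespace Nat

theorem bitIndices_two_pow_add_two_pow {a b : ℕ} (h : a < b) :
    (2 ^ a + 2 ^ b).bitIndices = [a, b] := by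
  simpa using
    bitIndices_sum_map_two_pow (L := [a, b]) (List.sortedLT_iff_pairwise.mpr (by simp [h]))

theorem two_pow_add_two_pow_eq_iff {a b c d : ℕ} :
    2 ^ a + 2 ^ b = 2 ^ c + 2 ^ d ↔ a = c ∧ b = d ∨ a = d ∧ b = c := by
  constructor
  · intro h
    have hbits : ∀ x y : ℕ, (2 ^ x + 2 ^ y).bitIndices =
        if x < y then [x, y] else if y < x then [y, x] else [x + 1] := by
      intro x y
      split_ifs with hxy hyx
      · exact bitIndices_two_pow_add_two_pow hxy
      · rw [add_comm]; exact bitIndices_two_pow_add_two_pow hyx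
      · rw [show y = x by omega, ← two_mul, ← pow_succ', bitIndices_two_pow]
    have := congrArg bitIndices h
    rw [hbits, hbits] at this
    split_ifs at this <;> simp at this <;> omega
  · rintro (⟨rfl, rfl⟩ | ⟨rfl, rfl⟩)
    · rfl
    · exact add_comm _ _

theorem self_add_sub_mod_self {P a b : ℕ} (ha : a < P) (hb : b ≤ P) :
    (P + a - b) % P = if b ≤ a then a - b else P + a - b := by
  split_ifs with h
  · rw [show P + a - b = P + (a - b) by omega, add_mod_left, mod_eq_of_lt (by omega)]
  · exact mod_eq_of_lt (by omega)

end Nat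

theorem two_pow_sub_two_pow_mod_eq_iff {N j s k t : ℕ} (hj : j < N) (hs : s < N) (hk : k < N)
    (ht : t < N) :
    (2 ^ N + 2 ^ j - 2 ^ s) % 2 ^ N = (2 ^ N + 2 ^ k - 2 ^ t) % 2 ^ N ↔
      2 ^ j + 2 ^ t = 2 ^ k + 2 ^ s := by
  have half {e : ℕ} (he : e < N) : 2 * 2 ^ e ≤ 2 ^ N := by
    rw [← pow_succ']; exact Nat.pow_le_pow_right two_pos he
  have := half hj; have := half hs; have := half hk; have := half ht
  have := Nat.two_pow_pos j; have := Nat.two_pow_pos s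
  have := Nat.two_pow_pos k; have := Nat.two_pow_pos t
  rw [Nat.self_add_sub_mod_self (by omega) (by omega),
    Nat.self_add_sub_mod_self (by omega) (by omega)]
  split_ifs <;> omega

theorem even_two_pow_sub_two_pow_mod {N j s : ℕ} (hN : N ≠ 0) (hj : j ≠ 0) (hs : s ≠ 0) :
    Even ((2 ^ N + 2 ^ j - 2 ^ s) % 2 ^ N) := by
  have even_two_pow {e : ℕ} (he : e ≠ 0) : Even (2 ^ e) := Nat.even_pow.mpr ⟨even_two, he⟩
  exact (((even_two_pow hN).add (even_two_pow hj)).tsub (even_two_pow hs)).mod_even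
    (even_two_pow hN)

theorem Finset.card_biUnion_pair_of_even {E : Finset ℕ} (hE : ∀ a ∈ E, Even a) :
    (E.biUnion fun a => {a, a + 1}).card = 2 * E.card := by
  rw [card_biUnion, sum_const_nat fun a _ => card_pair (Nat.ne_add_one a), mul_comm]
  intro a ha b hb hab
  obtain ⟨a', rfl⟩ := hE a ha
  obtain ⟨b', rfl⟩ := hE b hb
  simp only [disjoint_insert_left, disjoint_insert_right, disjoint_singleton, mem_insert,
    mem_singleton]
  omega

-- The α_j of the statement are `shiftSet (2 * n) i`, the β_j are `shiftSet (2 * n) (i + n)`.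
def shiftSet (m s : ℕ) : Finset ℕ :=
  ((Finset.Icc 1 m).filter (· ≠ s)).image fun j => (2 ^ (m + 1) + 2 ^ j - 2 ^ s) % 2 ^ (m + 1)

section shiftSet

variable {m s t : ℕ}

theorem even_of_mem_shiftSet (hs : s ≠ 0) {x : ℕ} (hx : x ∈ shiftSet m s) : Even x := by
  simp only [shiftSet, Finset.mem_image, Finset.mem_filter, Finset.mem_Icc] at hx
  obtain ⟨j, ⟨⟨hj, -⟩, -⟩, rfl⟩ := hx
  exact even_two_pow_sub_two_pow_mod m.succ_ne_zero (by omega) hs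

theorem card_shiftSet (hs₁ : 1 ≤ s) (hs₂ : s ≤ m) : (shiftSet m s).card = m - 1 := by
  rw [shiftSet, Finset.card_image_of_injOn, Finset.filter_ne', Finset.card_erase_of_mem
    (Finset.mem_Icc.mpr ⟨hs₁, hs₂⟩), Nat.card_Icc, Nat.add_sub_cancel]
  intro j hj k hk h
  simp only [Finset.coe_filter, Finset.mem_Icc, Set.mem_ofPred_eq] at hj hk
  rw [two_pow_sub_two_pow_mod_eq_iff (by omega) (by omega) (by omega) (by omega),
    add_left_inj] at h
  exact Nat.pow_right_injective le_rfl h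

theorem zero_notMem_shiftSet (hs : s ≤ m) : 0 ∉ shiftSet m s := by
  simp only [shiftSet, Finset.mem_image, Finset.mem_filter, Finset.mem_Icc, not_exists, not_and]
  intro j ⟨⟨_, hj⟩, hjs⟩ h
  have hss : (2 ^ (m + 1) + 2 ^ s - 2 ^ s) % 2 ^ (m + 1) = 0 := by simp
  rw [← hss, two_pow_sub_two_pow_mod_eq_iff (by omega) (by omega) (by omega) (by omega),
    add_left_inj] at h
  exact hjs (Nat.pow_right_injective le_rfl h)

theorem disjoint_shiftSet (hs : s ≤ m) (ht : t ≤ m) (hst : s ≠ t) :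
    Disjoint (shiftSet m s) (shiftSet m t) := by
  simp only [shiftSet, Finset.disjoint_left, Finset.mem_image, Finset.mem_filter,
    Finset.mem_Icc, not_exists, not_and]
  rintro _ ⟨j, ⟨⟨_, hj⟩, hjs⟩, rfl⟩ k ⟨⟨_, hk⟩, hkt⟩ h
  rw [two_pow_sub_two_pow_mod_eq_iff (by omega) (by omega) (by omega) (by omega),
    Nat.two_pow_add_two_pow_eq_iff] at h
  omega

end shiftSet

theorem distinct_shifts (n i : ℕ) (hn : 1 ≤ n) (hi₁ : 1 ≤ i) (hi₂ : i ≤ n) :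
    (({0, 1} : Finset ℕ) ∪
      ((Finset.Icc 1 (2 * n)).filter (· ≠ i)).biUnion
        (fun j => {(2 ^ (2 * n + 1) + 2 ^ j - 2 ^ i) % 2 ^ (2 * n + 1),
          (2 ^ (2 * n + 1) + 2 ^ j - 2 ^ i) % 2 ^ (2 * n + 1) + 1}) ∪
      ((Finset.Icc 1 (2 * n)).filter (· ≠ i + n)).biUnion
        (fun j => {(2 ^ (2 * n + 1) + 2 ^ j - 2 ^ (i + n)) % 2 ^ (2 * n + 1),
          (2 ^ (2 * n + 1) + 2 ^ j - 2 ^ (i + n)) % 2 ^ (2 * n + 1) + 1})).card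
      = 8 * n - 2 := by
  set E := {0} ∪ shiftSet (2 * n) i ∪ shiftSet (2 * n) (i + n)
  have hE : ∀ a ∈ E, Even a := by
    simp only [E, Finset.mem_union, Finset.mem_singleton]
    rintro a ((rfl | ha) | ha)
    · exact Even.zero
    · exact even_of_mem_shiftSet (by omega) ha
    · exact even_of_mem_shiftSet (by omega) ha
  calc _ = (E.biUnion fun a => {a, a + 1}).card := by
        simp only [E, shiftSet, Finset.union_biUnion, Finset.image_biUnion,
          Finset.singleton_biUnion, zero_add]
    _ = 2 * E.card := Finset.card_biUnion_pair_of_even hE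
    _ = 8 * n - 2 := by
      have hzero {s : ℕ} (hs : s ≤ 2 * n) : Disjoint {0} (shiftSet (2 * n) s) :=
        Finset.disjoint_singleton_left.mpr (zero_notMem_shiftSet hs)
      have hαβ := disjoint_shiftSet (m := 2 * n) (s := i) (t := i + n) (by omega) (by omega)
        (by omega)
      rw [Finset.card_union_of_disjoint
          (Finset.disjoint_union_left.mpr ⟨hzero (by omega), hαβ⟩),
        Finset.card_union_of_disjoint (hzero (by omega)), Finset.card_singleton,
        card_shiftSet hi₁ (by omega), card_shiftSet (by omega) (by omega)]
      omega
end

section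
/- Let f₁, f₂ : ℕ → ℕ be matchings and A ⊆ ℕ, and suppose: (i) the sets A, f₁(A), f₂(A) are pairwise disjoint; (ii) f₁(x) = x for every x ∈ f₂(A); (iii) f₂(x) = x for every x ∉ A ∪ f₂(A). Then the map g = (f₁∘f₂)⁴∘f₂ satisfies g(x) = f₁(x) for every x ∈ A ∪ f₁(A), and g(x) = x for every x ∉ A ∪ f₁(A); that is, g is the matching that interchanges x and f₁(x) for each x ∈ A and fixes all other points. -/
/-! With `h := f₁ ∘ f₂ ∘ f₁`, the involution `f₂` gives `(f₁ ∘ f₂)^[4] ∘ f₂ = h ∘ f₂ ∘ h`, the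
conjugate of `f₂` by the matching `h`. Under the hypotheses, `h` fixes `A`, interchanges `f₁ a` and
`f₂ a` for `a ∈ A`, and fixes every point outside `A ∪ f₁(A) ∪ f₂(A)`. Conjugating `f₂`, which
interchanges `a` and `f₂ a`, by `h` therefore interchanges `a` and `f₁ a` and fixes everything
else. -/

open Function Set

variable {α : Type*} {f₁ f₂ : α → α} {A : Set α}

theorem comp_iterate_four_comp_eq_conj (hf₂ : Involutive f₂) :
    (f₁ ∘ f₂)^[4] ∘ f₂ = (f₁ ∘ f₂ ∘ f₁) ∘ f₂ ∘ (f₁ ∘ f₂ ∘ f₁) := by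
  funext x
  simp [hf₂ x]

theorem Function.Involutive.conj_apply_of_apply_eq {h : α → α} (hh : Involutive h) (f : α → α)
    {x y : α} (hxy : h x = y) : (h ∘ f ∘ h) y = h (f x) := by
  subst hxy
  simp [hh x]

theorem involutive_conj (hf₁ : Involutive f₁) (hf₂ : Involutive f₂) :
    Involutive (f₁ ∘ f₂ ∘ f₁) := fun x => by
  simp [hf₁ (f₂ (f₁ x)), hf₂ (f₁ x), hf₁ x]

theorem f₂_f₁_apply_of_mem (hd₁ : Disjoint A (f₁ '' A)) (hd₃ : Disjoint (f₁ '' A) (f₂ '' A))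
    (hfix₂ : ∀ x, x ∉ A ∪ f₂ '' A → f₂ x = x) {a : α} (ha : a ∈ A) : f₂ (f₁ a) = f₁ a :=
  hfix₂ _ fun h => h.elim (disjoint_right.mp hd₁ (mem_image_of_mem f₁ ha))
    (disjoint_left.mp hd₃ (mem_image_of_mem f₁ ha))

theorem conj_apply_eq_self_of_mem (hf₁ : Involutive f₁) (hd₁ : Disjoint A (f₁ '' A))
    (hd₃ : Disjoint (f₁ '' A) (f₂ '' A)) (hfix₂ : ∀ x, x ∉ A ∪ f₂ '' A → f₂ x = x)
    {a : α} (ha : a ∈ A) : f₁ (f₂ (f₁ a)) = a := by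
  rw [f₂_f₁_apply_of_mem hd₁ hd₃ hfix₂ ha, hf₁ a]

theorem conj_f₂_apply_of_mem (hf₂ : Involutive f₂) (hfix₁ : ∀ x ∈ f₂ '' A, f₁ x = x)
    {a : α} (ha : a ∈ A) : f₁ (f₂ (f₁ (f₂ a))) = f₁ a := by
  rw [hfix₁ _ (mem_image_of_mem f₂ ha), hf₂ a]

theorem conj_f₁_apply_of_mem (hf₁ : Involutive f₁) (hfix₁ : ∀ x ∈ f₂ '' A, f₁ x = x)
    {a : α} (ha : a ∈ A) : f₁ (f₂ (f₁ (f₁ a))) = f₂ a := by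
  rw [hf₁ a, hfix₁ _ (mem_image_of_mem f₂ ha)]

theorem conj_apply_eq_self_of_notMem (hf₁ : Involutive f₁) (hfix₁ : ∀ x ∈ f₂ '' A, f₁ x = x)
    (hfix₂ : ∀ x, x ∉ A ∪ f₂ '' A → f₂ x = x) {x : α} (hx : x ∉ A ∪ f₁ '' A ∪ f₂ '' A) :
    f₁ (f₂ (f₁ x)) = x := by
  suffices f₂ (f₁ x) = f₁ x by rw [this, hf₁ x]
  refine hfix₂ _ fun hmem => hx ?_
  rcases hmem with hA | hf₂A
  · exact Or.inl (Or.inr ⟨f₁ x, hA, hf₁ x⟩)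
  · have hx_fixed : x = f₁ x := (hf₁ x).symm.trans (hfix₁ _ hf₂A)
    exact Or.inr (hx_fixed ▸ hf₂A)

theorem matching_delete_general (f₁ f₂ : ℕ → ℕ) (A : Set ℕ)
    (hf₁ : ∀ x, f₁ (f₁ x) = x) (hf₂ : ∀ x, f₂ (f₂ x) = x)
    (hd₁ : Disjoint A (f₁ '' A))
    (hd₃ : Disjoint (f₁ '' A) (f₂ '' A))
    (hfix₁ : ∀ x ∈ f₂ '' A, f₁ x = x)
    (hfix₂ : ∀ x, x ∉ A ∪ f₂ '' A → f₂ x = x) :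
    (∀ x ∈ A ∪ f₁ '' A, ((f₁ ∘ f₂)^[4] ∘ f₂) x = f₁ x) ∧
      (∀ x, x ∉ A ∪ f₁ '' A → ((f₁ ∘ f₂)^[4] ∘ f₂) x = x) := by
  have conj {x y : ℕ} (hxy : (f₁ ∘ f₂ ∘ f₁) x = y) :=
    (involutive_conj hf₁ hf₂).conj_apply_of_apply_eq f₂ hxy
  rw [comp_iterate_four_comp_eq_conj hf₂]
  refine ⟨?_, fun x hx => ?_⟩
  · rintro x (hx | ⟨a, ha, rfl⟩)
    · exact (conj (conj_apply_eq_self_of_mem hf₁ hd₁ hd₃ hfix₂ hx)).trans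
        (conj_f₂_apply_of_mem hf₂ hfix₁ hx)
    · rw [conj (conj_f₂_apply_of_mem hf₂ hfix₁ ha), hf₂ a, hf₁ a]
      exact conj_apply_eq_self_of_mem hf₁ hd₁ hd₃ hfix₂ ha
  · by_cases hx₂ : x ∈ f₂ '' A
    · obtain ⟨a, ha, rfl⟩ := hx₂
      rw [conj (conj_f₁_apply_of_mem hf₁ hfix₁ ha),
        f₂_f₁_apply_of_mem hd₁ hd₃ hfix₂ ha]
      exact conj_f₁_apply_of_mem hf₁ hfix₁ ha
    · have hx' : x ∉ A ∪ f₁ '' A ∪ f₂ '' A := fun h => h.elim hx hx₂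
      have hx_fixed : f₂ x = x := hfix₂ x fun h => h.elim (hx ∘ Or.inl) hx₂
      rw [conj (conj_apply_eq_self_of_notMem hf₁ hfix₁ hfix₂ hx'), hx_fixed]
      exact conj_apply_eq_self_of_notMem hf₁ hfix₁ hfix₂ hx'

theorem matching_delete (f₁ f₂ : ℕ → ℕ) (A : Set ℕ)
    (hf₁ : ∀ x, f₁ (f₁ x) = x) (hf₂ : ∀ x, f₂ (f₂ x) = x)
    (hd₁ : Disjoint A (f₁ '' A)) (hd₂ : Disjoint A (f₂ '' A))
    (hd₃ : Disjoint (f₁ '' A) (f₂ '' A))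
    (hfix₁ : ∀ x ∈ f₂ '' A, f₁ x = x)
    (hfix₂ : ∀ x, x ∉ A ∪ f₂ '' A → f₂ x = x) :
    (∀ x ∈ A ∪ f₁ '' A, ((f₁ ∘ f₂)^[4] ∘ f₂) x = f₁ x) ∧
      (∀ x, x ∉ A ∪ f₁ '' A → ((f₁ ∘ f₂)^[4] ∘ f₂) x = x) :=
  matching_delete_general f₁ f₂ A hf₁ hf₂ hd₁ hd₃ hfix₁ hfix₂
end

section
/- Let B be a set of quadruples (b₁,b₂,b₃,b₄) of natural numbers such that all components occurring in quadruples of B are pairwise distinct (both within each quadruple and across different quadruples), and let A ⊆ ℕ contain every component of every quadruple of B. Let f be the matching that interchanges b₁ ↔ b₃ and b₂ ↔ b₄ for every (b₁,b₂,b₃,b₄) ∈ B and fixes all other points; let f₁′ be the matching that interchanges b₁ ↔ b₂ and b₃ ↔ b₄ for every (b₁,b₂,b₃,b₄) ∈ B and fixes all other points; and let f₂′ be the matching that interchanges b₁ ↔ b₃ for every (b₁,b₂,b₃,b₄) ∈ B and fixes all other points. Let f₁″ and f₂″ be matchings over sets A₁″ and A₂″ respectively, where A, A₁″, A₂″ are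 pairwise disjoint, and set f₁ = f₁′∘f₁″ and f₂ = f₂′∘f₂″. Then f = (f₁∘f₂)². -/
/-!
Split ℕ into `A` and its complement. The maps `f₁'`, `f₂'` map `A` into itself and fix its
complement, while the involutions `f₁''`, `f₂''` do the reverse. Hence on `A` the square
`(f₁ ∘ f₂)²` agrees with `(f₁' ∘ f₂')²`, which on every quadruple is the square of
`(b₁ b₂)(b₃ b₄)(b₁ b₃)`, namely `(b₁ b₃)(b₂ b₄)`, i.e. `f`. Off `A` it agrees with
`(f₁'' ∘ f₂'')²`, the identity, because involutions with disjoint supports commute.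
-/

open Function Set

variable {α : Type*}

def SupportedIn (u : α → α) (s : Set α) : Prop :=
  MapsTo u s s ∧ EqOn u id sᶜ

namespace SupportedIn

variable {u v : α → α} {s t : Set α}

lemma of_involutive (hu : Involutive u) (hfix : ∀ x ∉ s, u x = x) : SupportedIn u s := by
  refine ⟨fun x hx => ?_, hfix⟩
  by_contra hux
  exact hux (by rwa [← hfix _ hux, hu x])

lemma mono (hu : SupportedIn u t) (hts : t ⊆ s) : SupportedIn u s := by
  refine ⟨fun x hx => ?_, hu.2.mono (compl_subset_compl.2 hts)⟩
  by_cases hxt : x ∈ t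
  · exact hts (hu.1 hxt)
  · rwa [hu.2 hxt]

lemma eqOn_comp_left (hv : SupportedIn v sᶜ) : EqOn (u ∘ v) u s :=
  fun _ hx => by simp [hv.2 (not_not_intro hx)]

lemma eqOn_comp_right (hu : SupportedIn u s) (hv : SupportedIn v sᶜ) : EqOn (u ∘ v) v sᶜ :=
  fun _ hx => hu.2 (hv.1 hx)

lemma comp_comm (hu : SupportedIn u s) (hv : SupportedIn v sᶜ) : u ∘ v = v ∘ u := by
  funext x
  by_cases hx : x ∈ s
  · simp [hv.2 (not_not_intro hx), hv.2 (not_not_intro (hu.1 hx))]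
  · simp [hu.2 hx, hu.2 (hv.1 hx)]

lemma comp_comp_eq_id (hu : SupportedIn u s) (hv : SupportedIn v sᶜ)
    (hu' : Involutive u) (hv' : Involutive v) : (u ∘ v) ∘ (u ∘ v) = id := by
  funext x
  have hcomm : u (v (v x)) = v (u (v x)) := congrFun (comp_comm hu hv) (v x)
  simp only [comp_apply, id_eq]
  rw [← hcomm, hv' x, hu' x]

end SupportedIn

lemma Set.EqOn.comp_comp {f₁ f₂ g₁ g₂ : α → α} {s : Set α} (h₁ : EqOn f₁ g₁ s)
    (h₂ : EqOn f₂ g₂ s) (hg₁ : MapsTo g₁ s s) (hg₂ : MapsTo g₂ s s) :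
    EqOn ((f₁ ∘ f₂) ∘ (f₁ ∘ f₂)) ((g₁ ∘ g₂) ∘ (g₁ ∘ g₂)) s := by
  have h : EqOn (f₁ ∘ f₂) (g₁ ∘ g₂) s :=
    (h₁.comp_right (h₂.mapsTo_iff.2 hg₂)).trans h₂.comp_left
  exact (h.comp_right (h.mapsTo_iff.2 (hg₁.comp hg₂))).trans h.comp_left

section Quadruples

variable {B : Set (Fin 4 → α)}

lemma supportedIn_of_quadruples {A : Set α} {g : α → α} (hBA : ∀ b ∈ B, ∀ k, b k ∈ A)
    (hgB : ∀ b ∈ B, ∀ k, g (b k) ∈ A) (hgfix : ∀ x, (∀ b ∈ B, ∀ k, x ≠ b k) → g x = x) :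
    SupportedIn g A := by
  have hfix : ∀ x ∉ A, g x = x := fun x hx =>
    hgfix x fun b hb k hxb => hx (hxb ▸ hBA b hb k)
  refine ⟨fun x hx => ?_, hfix⟩
  by_cases hcomp : ∀ b ∈ B, ∀ k, x ≠ b k
  · rwa [hgfix x hcomp]
  · push Not at hcomp
    obtain ⟨b, hb, k, rfl⟩ := hcomp
    exact hgB b hb k

lemma apply_eq_self_of_ne_zero_of_ne_two {g : α → α}
    (hdist : ∀ b ∈ B, ∀ b' ∈ B, ∀ k k' : Fin 4, (b ≠ b' ∨ k ≠ k') → b k ≠ b' k')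
    (hgfix : ∀ x, (∀ b ∈ B, x ≠ b 0 ∧ x ≠ b 2) → g x = x) {b : Fin 4 → α} (hb : b ∈ B)
    {k : Fin 4} (h0 : k ≠ 0) (h2 : k ≠ 2) : g (b k) = b k :=
  hgfix _ fun b' hb' => ⟨hdist b hb b' hb' k 0 (.inr h0), hdist b hb b' hb' k 2 (.inr h2)⟩

lemma comp_comp_eq_of_quadruples {f g₁ g₂ : α → α}
    (hfB : ∀ b ∈ B, f (b 0) = b 2 ∧ f (b 2) = b 0 ∧ f (b 1) = b 3 ∧ f (b 3) = b 1)
    (hffix : ∀ x, (∀ b ∈ B, ∀ k, x ≠ b k) → f x = x)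
    (hg₁B : ∀ b ∈ B, g₁ (b 0) = b 1 ∧ g₁ (b 1) = b 0 ∧ g₁ (b 2) = b 3 ∧ g₁ (b 3) = b 2)
    (hg₁fix : ∀ x, (∀ b ∈ B, ∀ k, x ≠ b k) → g₁ x = x)
    (hg₂B : ∀ b ∈ B, g₂ (b 0) = b 2 ∧ g₂ (b 2) = b 0 ∧ g₂ (b 1) = b 1 ∧ g₂ (b 3) = b 3)
    (hg₂fix : ∀ x, (∀ b ∈ B, ∀ k, x ≠ b k) → g₂ x = x) :
    (g₁ ∘ g₂) ∘ (g₁ ∘ g₂) = f := by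
  funext x
  by_cases hcomp : ∀ b ∈ B, ∀ k, x ≠ b k
  · simp [hffix x hcomp, hg₁fix x hcomp, hg₂fix x hcomp]
  · push Not at hcomp
    obtain ⟨b, hb, k, rfl⟩ := hcomp
    obtain ⟨f0, f2, f1, f3⟩ := hfB b hb
    obtain ⟨p0, p1, p2, p3⟩ := hg₁B b hb
    obtain ⟨q0, q2, q1, q3⟩ := hg₂B b hb
    fin_cases k <;> simp [f0, f1, f2, f3, p0, p1, p2, p3, q0, q1, q2, q3]

end Quadruples

theorem matching_mega_delete (B : Set (Fin 4 → ℕ)) (A A₁ A₂ : Set ℕ)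
    (hdist : ∀ b ∈ B, ∀ b' ∈ B, ∀ k k' : Fin 4, (b ≠ b' ∨ k ≠ k') → b k ≠ b' k')
    (hBA : ∀ b ∈ B, ∀ k : Fin 4, b k ∈ A)
    (f f₁' f₂' f₁'' f₂'' : ℕ → ℕ)
    (hfB : ∀ b ∈ B,
      f (b 0) = b 2 ∧ f (b 2) = b 0 ∧ f (b 1) = b 3 ∧ f (b 3) = b 1)
    (hffix : ∀ x, (∀ b ∈ B, ∀ k : Fin 4, x ≠ b k) → f x = x)
    (hf₁'B : ∀ b ∈ B,
      f₁' (b 0) = b 1 ∧ f₁' (b 1) = b 0 ∧ f₁' (b 2) = b 3 ∧ f₁' (b 3) = b 2)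
    (hf₁'fix : ∀ x, (∀ b ∈ B, ∀ k : Fin 4, x ≠ b k) → f₁' x = x)
    (hf₂'B : ∀ b ∈ B, f₂' (b 0) = b 2 ∧ f₂' (b 2) = b 0)
    (hf₂'fix : ∀ x, (∀ b ∈ B, x ≠ b 0 ∧ x ≠ b 2) → f₂' x = x)
    (hf₁'' : ∀ x, f₁'' (f₁'' x) = x) (hf₁''fix : ∀ x ∉ A₁, f₁'' x = x)
    (hf₂'' : ∀ x, f₂'' (f₂'' x) = x) (hf₂''fix : ∀ x ∉ A₂, f₂'' x = x)
    (hAA₁ : Disjoint A A₁) (hAA₂ : Disjoint A A₂) (hA₁₂ : Disjoint A₁ A₂) :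
    f = ((f₁' ∘ f₁'') ∘ (f₂' ∘ f₂'')) ∘ ((f₁' ∘ f₁'') ∘ (f₂' ∘ f₂'')) := by
  have hf₂'B' : ∀ b ∈ B,
      f₂' (b 0) = b 2 ∧ f₂' (b 2) = b 0 ∧ f₂' (b 1) = b 1 ∧ f₂' (b 3) = b 3 := fun b hb =>
    ⟨(hf₂'B b hb).1, (hf₂'B b hb).2,
      apply_eq_self_of_ne_zero_of_ne_two hdist hf₂'fix hb (by decide) (by decide),
      apply_eq_self_of_ne_zero_of_ne_two hdist hf₂'fix hb (by decide) (by decide)⟩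
  have hf₂'fix' : ∀ x, (∀ b ∈ B, ∀ k : Fin 4, x ≠ b k) → f₂' x = x :=
    fun x hx => hf₂'fix x fun b hb => ⟨hx b hb 0, hx b hb 2⟩
  have h₁' : SupportedIn f₁' A := supportedIn_of_quadruples hBA
    (fun b hb k => by fin_cases k <;> simp [hf₁'B b hb, hBA b hb]) hf₁'fix
  have h₂' : SupportedIn f₂' A := supportedIn_of_quadruples hBA
    (fun b hb k => by fin_cases k <;> simp [hf₂'B' b hb, hBA b hb]) hf₂'fix'
  have h₁'' := SupportedIn.of_involutive hf₁'' hf₁''fix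
  have h₂'' := SupportedIn.of_involutive hf₂'' hf₂''fix
  have hA₁'' := h₁''.mono hAA₁.subset_compl_left
  have hA₂'' := h₂''.mono hAA₂.subset_compl_left
  funext x
  by_cases hx : x ∈ A
  · calc f x = ((f₁' ∘ f₂') ∘ (f₁' ∘ f₂')) x :=
          (congrFun (comp_comp_eq_of_quadruples hfB hffix hf₁'B hf₁'fix hf₂'B' hf₂'fix') x).symm
      _ = _ := (EqOn.comp_comp hA₁''.eqOn_comp_left hA₂''.eqOn_comp_left h₁'.1 h₂'.1 hx).symm
  · calc f x = ((f₁'' ∘ f₂'') ∘ (f₁'' ∘ f₂'')) x := by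
          rw [h₁''.comp_comp_eq_id (h₂''.mono hA₁₂.subset_compl_left) hf₁'' hf₂'']
          exact hffix x fun b hb k hxb => hx (hxb ▸ hBA b hb k)
      _ = _ := (EqOn.comp_comp (h₁'.eqOn_comp_right hA₁'') (h₂'.eqOn_comp_right hA₂'')
          hA₁''.1 hA₂''.1 hx).symm
end
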